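/- Let $G$ be a finite non-abelian group that is a CA-group (every centralizer of a non-central element is abelian), and let $X_1,\ldots,X_n$ be the distinct centralizers of non-central elements of $G$. Then the non-commuting graph $\Gamma_G$ is the complete multipartite graph $K_{m_1,\ldots,m_n}$ where $m_i = |X_i| - |Z(G)|$. -/

import Mathlib

/-- The non-commuting graph of a group: vertices are the non-central elements,
two vertices adjacent iff they do not commute. -/
def noncommGraph (G : Type*) [Group G] :
    SimpleGraph {g : G // g ∉ Subgroup.center G} where
  Adj u v := u.1 * v.1 ≠ v.1 * u.1
  symm := ⟨fun _ _ h e => h e.symm⟩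
  loopless := ⟨fun _ h => h rfl⟩

/-! In a CA-group two non-central elements commute exactly when they have the same centralizer:
if `g` commutes with `x`, then `x` lies in the abelian group `C(g)`, so `C(g) ≤ C(x)`, and
symmetrically. Hence non-commutation on `G \ Z(G)` is the relation "lie in different parts" of
the partition by centralizers, and the part belonging to `X i` is `X i \ Z(G)`. -/

namespace SimpleGraph

def isoCompleteMultipartiteGraphOfAdjIff {V ι : Type*} {β : ι → Type*} (G : SimpleGraph V)
    (f : V → ι) (hG : ∀ u v, G.Adj u v ↔ f u ≠ f v) (e : ∀ i, {v // f v = i} ≃ β i) :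
    G ≃g completeMultipartiteGraph β where
  toEquiv := (Equiv.sigmaFiberEquiv f).symm.trans (Equiv.sigmaCongrRight e)
  map_rel_iff' {u v} := (hG u v).symm

end SimpleGraph

namespace Subgroup

variable {G : Type*} [Group G]

theorem centralizer_singleton_le_of_mem {g h : G} [IsMulCommutative (centralizer {g})]
    (hh : h ∈ centralizer {g}) : centralizer {g} ≤ centralizer {h} := fun _ hy =>
  mem_centralizer_singleton_iff.2 (setLike_mul_comm hy hh)

theorem centralizer_singleton_eq_iff_mem {g x : G} [IsMulCommutative (centralizer {g})]
    [IsMulCommutative (centralizer {x})] :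
    centralizer {g} = centralizer {x} ↔ g ∈ centralizer {x} := by
  refine ⟨fun h => h ▸ mem_centralizer_singleton_iff.2 rfl, fun hg => ?_⟩
  have hx : x ∈ centralizer {g} :=
    mem_centralizer_singleton_iff.2 (mem_centralizer_singleton_iff.1 hg).symm
  exact le_antisymm (centralizer_singleton_le_of_mem hx) (centralizer_singleton_le_of_mem hg)

end Subgroup

open Subgroup

theorem noncommGraph_adj_iff_centralizer_ne {G : Type*} [Group G]
    (hCA : ∀ x : G, x ∉ center G → IsMulCommutative (centralizer {x}))
    (u v : {g : G // g ∉ center G}) :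
    (noncommGraph G).Adj u v ↔ centralizer {u.1} ≠ centralizer {v.1} := by
  have := hCA u.1 u.2
  have := hCA v.1 v.2
  rw [Ne, centralizer_singleton_eq_iff_mem, mem_centralizer_singleton_iff]
  rfl

theorem noncommGraph_CA_completeMultipartite (G : Type*) [Group G] [Fintype G]
    (hCA : ∀ x : G, x ∉ Subgroup.center G → IsMulCommutative (Subgroup.centralizer {x}))
    (n : ℕ) (X : Fin n → Subgroup G) (hinj : Function.Injective X)
    (hrange : Set.range X =
      {H : Subgroup G | ∃ x : G, x ∉ Subgroup.center G ∧ H = Subgroup.centralizer {x}}) :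
    Nonempty (noncommGraph G ≃g SimpleGraph.completeMultipartiteGraph
      fun i : Fin n => Fin (Nat.card (X i) - Nat.card (Subgroup.center G))) := by
  choose f hf using fun v : {g : G // g ∉ center G} =>
    (hrange ▸ ⟨v.1, v.2, rfl⟩ : centralizer {v.1} ∈ Set.range X)
  have hadj (u v) : (noncommGraph G).Adj u v ↔ f u ≠ f v := by
    rw [noncommGraph_adj_iff_centralizer_ne hCA, ← hf, ← hf, hinj.ne_iff]
  have hX (i) : ∃ x ∉ center G, X i = centralizer {x} :=
    hrange.subset (Set.mem_range_self i)
  have hfiber (i) (v : {g : G // g ∉ center G}) : f v = i ↔ v.1 ∈ X i := by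
    obtain ⟨x, hx, hXi⟩ := hX i
    have := hCA v.1 v.2
    have := hCA x hx
    rw [← hinj.eq_iff, hf, hXi, centralizer_singleton_eq_iff_mem]
  have hcenter (i) : center G ≤ X i := by
    obtain ⟨x, -, hXi⟩ := hX i
    exact hXi ▸ center_le_centralizer {x}
  have hpart (i) : {v // f v = i} ≃ ↥((X i : Set G) \ center G) :=
    (Equiv.subtypeEquivRight (hfiber i)).trans
      ((Equiv.subtypeSubtypeEquivSubtypeInter _ _).trans (Equiv.subtypeEquivRight fun _ => and_comm))
  exact ⟨SimpleGraph.isoCompleteMultipartiteGraphOfAdjIff _ f hadj fun i =>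
    (hpart i).trans (Finite.equivFinOfCardEq (Set.ncard_sdiff' (hcenter i)))⟩
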